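/- Fix a positive integer t. Let 𝓗 ⊆ 2^[n] be an at most t-intersecting, k-uniform family (with t ≤ k ≤ n). Then there exist sequences of positive integers (n_j), (k_j) and families 𝓗_j ⊆ 2^[n_j] such that: (a) each 𝓗_j is at most t-intersecting and k_j-uniform; (b) k_j·|𝓗_j|/n_j = k·|𝓗|/n for all j; and (c) k_j → ∞ as j → ∞. -/
import Mathlib


open Finset

/-- `H` is a family of subsets of `[n] = {1, …, n}`. -/
def OnGround (n : ℕ) (H : Finset (Finset ℕ)) : Prop :=
  ∀ A ∈ H, A ⊆ Finset.Icc 1 n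

/-- `H` is `k`-uniform: every member has cardinality `k`. -/
def Uniform (k : ℕ) (H : Finset (Finset ℕ)) : Prop :=
  ∀ A ∈ H, A.card = k

/-- `H` is at most `t`-intersecting: distinct members meet in at most `t` elements. -/
def AtMostIntersecting (t : ℕ) (H : Finset (Finset ℕ)) : Prop :=
  ∀ A ∈ H, ∀ B ∈ H, A ≠ B → (A ∩ B).card ≤ t

/-- `H` is maximally cover-free: no member is contained in the union of the others. -/
def MaxCoverFree (H : Finset (Finset ℕ)) : Prop :=
  ∀ A ∈ H, ¬ A ⊆ (H.erase A).biUnion id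

/-- `ϖ(n,k,t)`: the maximum size of an at most `t`-intersecting, `k`-uniform
family of subsets of `[n]`. -/
noncomputable def varpi (n k t : ℕ) : ℕ :=
  sSup {m | ∃ H : Finset (Finset ℕ),
    OnGround n H ∧ Uniform k H ∧ AtMostIntersecting t H ∧ H.card = m}


def enc (q : ℕ) (x y : ZMod q) : ℕ := x.val * q + y.val + 1

lemma enc_inj (q : ℕ) [NeZero q] {x y x' y' : ZMod q}
    (h : enc q x y = enc q x' y') : x = x' ∧ y = y' := by
  unfold enc at h
  have hy := ZMod.val_lt y
  have hy' := ZMod.val_lt y'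
  have h2 : x.val * q + y.val = x'.val * q + y'.val := by omega
  have e1 : ∀ (u v : ℕ), v < q → (u * q + v) % q = v := by
    intro u v hv
    rw [Nat.add_comm, Nat.add_mul_mod_self_right, Nat.mod_eq_of_lt hv]
  have hyy : y.val = y'.val := by
    rw [← e1 x.val y.val hy, ← e1 x'.val y'.val hy', h2]
  have hq : q ≠ 0 := NeZero.ne q
  have hxx : x.val = x'.val := by
    have : x.val * q = x'.val * q := by omega
    exact Nat.eq_of_mul_eq_mul_right (Nat.pos_of_ne_zero hq) this
  exact ⟨ZMod.val_injective q hxx, ZMod.val_injective q hyy⟩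

def lineSet (q : ℕ) [NeZero q] (m b : ZMod q) : Finset ℕ :=
  Finset.univ.image fun x => enc q x (m * x + b)

lemma lineSet_card (q : ℕ) [NeZero q] (m b : ZMod q) : (lineSet q m b).card = q := by
  rw [lineSet, Finset.card_image_of_injective _ ?_, Finset.card_univ, ZMod.card]
  intro x x' h
  exact (enc_inj q h).1

lemma lineSet_subset (n q : ℕ) [NeZero q] (hn : 1 ≤ n) (m b : ZMod q) :
    lineSet q m b ⊆ Finset.Icc 1 (n * q ^ 2) := by
  intro p hp
  simp only [lineSet, Finset.mem_image] at hp
  obtain ⟨x, -, rfl⟩ := hp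
  have h1 := ZMod.val_lt x
  have h2 := ZMod.val_lt (m * x + b)
  simp only [Finset.mem_Icc, enc]
  constructor
  · omega
  · have : x.val * q + (m * x + b).val + 1 ≤ q * q := by nlinarith
    have : q * q ≤ n * q ^ 2 := by nlinarith
    omega

lemma lineSet_inj (q : ℕ) [NeZero q] {m b m' b' : ZMod q}
    (h : lineSet q m b = lineSet q m' b') : m = m' ∧ b = b' := by
  have mem : ∀ (x : ZMod q), enc q x (m * x + b) ∈ lineSet q m' b' := by
    intro x
    rw [← h]
    exact Finset.mem_image.2 ⟨x, Finset.mem_univ x, rfl⟩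
  have key : ∀ (x : ZMod q), m * x + b = m' * x + b' := by
    intro x
    obtain ⟨z, -, hz⟩ := Finset.mem_image.1 (mem x)
    obtain ⟨h1, h2⟩ := enc_inj q hz
    rw [h1] at h2
    exact h2.symm
  have hb : b = b' := by have := key 0; simpa using this
  have hm : m = m' := by
    have := key 1
    rw [hb] at this
    simpa using this
  exact ⟨hm, hb⟩

lemma lineSet_inter (q : ℕ) (hq : q.Prime) (m b m' b' : ZMod q)
    (hne : ¬(m = m' ∧ b = b')) :
    haveI : NeZero q := ⟨hq.ne_zero⟩
    (lineSet q m b ∩ lineSet q m' b').card ≤ 1 := by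
  haveI : NeZero q := ⟨hq.ne_zero⟩
  haveI : Fact q.Prime := ⟨hq⟩
  rw [Finset.card_le_one]
  intro p hp p' hp'
  simp only [Finset.mem_inter, lineSet, Finset.mem_image] at hp hp'
  obtain ⟨⟨x, -, hx⟩, ⟨z, -, hz⟩⟩ := hp
  obtain ⟨⟨x', -, hx'⟩, ⟨z', -, hz'⟩⟩ := hp'
  rw [← hz] at hx; rw [← hz'] at hx'
  obtain ⟨he1, he2⟩ := enc_inj q hx
  obtain ⟨he1', he2'⟩ := enc_inj q hx'
  subst he1; subst he1'
  -- he2 : m * z + b = m' * z + b', he2' : m * z' + b = m' * z' + b'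
  have hmm : m ≠ m' := by
    intro hm
    subst hm
    exact hne ⟨rfl, by have := he2; simpa using this⟩
  have hzz : x = x' := by
    have h1 : (m - m') * x = b' - b := by linear_combination he2
    have h2 : (m - m') * x' = b' - b := by linear_combination he2'
    exact mul_left_cancel₀ (sub_ne_zero.2 hmm) (h1.trans h2.symm)
  rw [← hz, ← hz', hzz]

def fam (q a : ℕ) [NeZero q] : Finset (Finset ℕ) :=
  (((Finset.range a).image (Nat.cast : ℕ → ZMod q)) ×ˢ Finset.univ).image
    fun p => lineSet q p.1 p.2

lemma fam_mem (q a : ℕ) [NeZero q] {A : Finset ℕ} (hA : A ∈ fam q a) :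
    ∃ m b : ZMod q, A = lineSet q m b := by
  obtain ⟨⟨m, b⟩, -, rfl⟩ := Finset.mem_image.1 hA
  exact ⟨m, b, rfl⟩

lemma fam_card (q a : ℕ) [NeZero q] (ha : a ≤ q) : (fam q a).card = a * q := by
  rw [fam, Finset.card_image_of_injective, Finset.card_product,
    Finset.card_image_of_injOn, Finset.card_range, Finset.card_univ, ZMod.card]
  · intro i hi i' hi' h
    simp only [Finset.mem_coe, Finset.mem_range] at hi hi'
    have := congrArg ZMod.val h
    rwa [ZMod.val_cast_of_lt (lt_of_lt_of_le hi ha),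
      ZMod.val_cast_of_lt (lt_of_lt_of_le hi' ha)] at this
  · intro p p' h
    obtain ⟨h1, h2⟩ := lineSet_inj q h
    exact Prod.ext h1 h2


open Filter in
/-- Fix a positive integer `t`, and let `𝓗 ⊆ 2^[n]` be an at most
`t`-intersecting, `k`-uniform family (with `t ≤ k ≤ n`). Then there are sequences
of positive integers `n_j`, `k_j` and families `𝓗_j ⊆ 2^[n_j]` such that each
`𝓗_j` is at most `t`-intersecting and `k_j`-uniform, the relative size
`k_j·|𝓗_j|/n_j` equals `k·|𝓗|/n` for all `j`, and `k_j → ∞`. -/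
theorem stmt15 (n k t : ℕ) (hn : 0 < n) (hk : 0 < k) (ht : 0 < t)
    (htk : t ≤ k) (hkn : k ≤ n)
    (H : Finset (Finset ℕ)) (hg : OnGround n H) (hu : Uniform k H)
    (hi : AtMostIntersecting t H) :
    ∃ (nn kk : ℕ → ℕ) (HH : ℕ → Finset (Finset ℕ)),
      (∀ j, 0 < nn j ∧ 0 < kk j) ∧
      (∀ j, OnGround (nn j) (HH j) ∧ Uniform (kk j) (HH j) ∧
        AtMostIntersecting t (HH j)) ∧
      (∀ j, (kk j : ℚ) * (HH j).card / (nn j) = (k : ℚ) * H.card / n) ∧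
      Tendsto kk atTop atTop := by
  set a := k * H.card with ha
  choose qq hq1 hq2 using fun j => Nat.exists_infinite_primes (max (a + 2) j)
  have hqpos : ∀ j, 0 < qq j := fun j => (hq2 j).pos
  have hqa : ∀ j, a ≤ qq j := fun j => le_trans (by omega) (le_trans (le_max_left _ j) (hq1 j))
  refine ⟨fun j => n * (qq j) ^ 2, qq,
    fun j => letI : NeZero (qq j) := ⟨(hqpos j).ne'⟩; fam (qq j) a, ?_, ?_, ?_, ?_⟩
  · intro j
    exact ⟨Nat.mul_pos hn (pow_pos (hqpos j) 2), hqpos j⟩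
  · intro j
    haveI : NeZero (qq j) := ⟨(hqpos j).ne'⟩
    refine ⟨?_, ?_, ?_⟩
    · intro A hA
      obtain ⟨m, b, rfl⟩ := fam_mem _ _ hA
      exact lineSet_subset n (qq j) hn m b
    · intro A hA
      obtain ⟨m, b, rfl⟩ := fam_mem _ _ hA
      exact lineSet_card _ m b
    · intro A hA B hB hAB
      obtain ⟨m, b, rfl⟩ := fam_mem _ _ hA
      obtain ⟨m', b', rfl⟩ := fam_mem _ _ hB
      have hne : ¬(m = m' ∧ b = b') := by
        rintro ⟨rfl, rfl⟩; exact hAB rfl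
      exact le_trans (lineSet_inter (qq j) (hq2 j) m b m' b' hne) ht
  · intro j
    haveI : NeZero (qq j) := ⟨(hqpos j).ne'⟩
    rw [fam_card _ _ (hqa j)]
    have h1 : (qq j : ℚ) ≠ 0 := Nat.cast_ne_zero.2 (hqpos j).ne'
    have h2 : (n : ℚ) ≠ 0 := Nat.cast_ne_zero.2 hn.ne'
    rw [ha]
    push_cast
    field_simp
  · exact tendsto_atTop_mono (fun j => le_trans (le_max_right _ j) (hq1 j)) tendsto_id
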